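/- For all integers r ≥ 1 and 1 ≤ j ≤ r, every f ∈ ℂ^N and every t > 0, the modulus of smoothness satisfies ω_r(f, t) ≤ t^j · ω_{r−j}(L^{j/2} f, t). -/

import Mathlib

/-! In the orthonormal eigenbasis `u`, both `T_s - I` and `L^{j/2}` are diagonal, with symbols
`e^{i s √λ} - 1` and `λ^{j/2}`. Since `|e^{iθ} - 1| ≤ |θ|`, the symbol of `(T_s - I)^r` is at most
`|s|^j λ^{j/2}` times that of `(T_s - I)^{r-j}`, and because the change of basis is unitary this
pointwise bound on symbols gives the bound on Euclidean norms for every `|s| ≤ t`. -/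

open Matrix

noncomputable section

/-- Euclidean (2-)norm on `ℂ^N`. -/
def cnorm2 {N : ℕ} (f : Fin N → ℂ) : ℝ := Real.sqrt (∑ i, ‖f i‖ ^ 2)

/-- The spectral operator `Σ_j c_j u_j u_j^*`. -/
def specOp {N : ℕ} (u : Fin N → Fin N → ℂ) (c : Fin N → ℂ) : Matrix (Fin N) (Fin N) ℂ :=
  ∑ j, c j • Matrix.vecMulVec (u j) (star (u j))

/-- The graph translation operator `T_s = Σ_j e^{i s √λ_j} u_j u_j^*`. -/
def Tmat {N : ℕ} (u : Fin N → Fin N → ℂ) (lam : Fin N → ℝ) (s : ℝ) :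
    Matrix (Fin N) (Fin N) ℂ :=
  specOp u (fun j => Complex.exp (Complex.I * (s : ℂ) * (Real.sqrt (lam j) : ℂ)))

/-- The `r`-th modulus of smoothness `ω_r(f,t) = sup_{|s| ≤ t} ‖(T_s - I)^r f‖₂`. -/
def omegaMod {N : ℕ} (u : Fin N → Fin N → ℂ) (lam : Fin N → ℝ) (r : ℕ) (f : Fin N → ℂ)
    (t : ℝ) : ℝ :=
  ⨆ s : {s : ℝ // |s| ≤ t}, cnorm2 (((Tmat u lam s.1 - 1) ^ r).mulVec f)

/-- Functional calculus power `L^x = Σ_j λ_j^x u_j u_j^*` (with `0^0 = 1`). -/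
def Lpow {N : ℕ} (u : Fin N → Fin N → ℂ) (lam : Fin N → ℝ) (x : ℝ) :
    Matrix (Fin N) (Fin N) ℂ :=
  specOp u (fun j => ((lam j ^ x : ℝ) : ℂ))

lemma sum_norm_sq_eq_re_star_dotProduct {n : Type*} [Fintype n] (v : n → ℂ) :
    ∑ i, ‖v i‖ ^ 2 = (star v ⬝ᵥ v).re := by
  simp only [dotProduct, Pi.star_apply, Complex.re_sum]
  refine Finset.sum_congr rfl fun k _ => ?_
  rw [RCLike.star_def, mul_comm, Complex.mul_conj, Complex.normSq_eq_norm_sq]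
  norm_cast

lemma cnorm2_mulVec_of_conjTranspose_mul_self {N : ℕ} {A : Matrix (Fin N) (Fin N) ℂ}
    (hA : Aᴴ * A = 1) (v : Fin N → ℂ) : cnorm2 (A *ᵥ v) = cnorm2 v := by
  rw [cnorm2, cnorm2, sum_norm_sq_eq_re_star_dotProduct, sum_norm_sq_eq_re_star_dotProduct,
    star_mulVec, dotProduct_mulVec, vecMul_vecMul, hA, vecMul_one]

lemma cnorm2_le_mul_of_norm_le {N : ℕ} {v w : Fin N → ℂ} {M : ℝ} (hM : 0 ≤ M)
    (h : ∀ k, ‖v k‖ ≤ M * ‖w k‖) : cnorm2 v ≤ M * cnorm2 w := by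
  rw [cnorm2, cnorm2, ← Real.sqrt_sq hM, ← Real.sqrt_mul (sq_nonneg M), Finset.mul_sum]
  refine Real.sqrt_le_sqrt (Finset.sum_le_sum fun k _ => ?_)
  rw [← mul_pow]
  exact pow_le_pow_left₀ (norm_nonneg _) (h k) 2

section Spectral

variable {N : ℕ} {u : Fin N → Fin N → ℂ}

lemma specOp_eq_conj (c : Fin N → ℂ) :
    specOp u c = (of u)ᵀ * diagonal c * ((of u)ᵀ)ᴴ := by
  ext a b
  rw [Matrix.mul_apply]
  simp only [specOp, Matrix.sum_apply, Matrix.smul_apply, vecMulVec_apply, Pi.star_apply,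
    smul_eq_mul, Matrix.mul_diagonal, conjTranspose_apply, transpose_apply, of_apply]
  exact Finset.sum_congr rfl fun k _ => by ring

lemma conjTranspose_mul_self_of_orthonormal
    (hu : ∀ i j, star (u i) ⬝ᵥ u j = if i = j then 1 else 0) :
    ((of u)ᵀ)ᴴ * (of u)ᵀ = 1 := by
  ext i j
  simpa [Matrix.mul_apply, dotProduct, Matrix.one_apply] using hu i j

lemma specOp_mulVec (c f : Fin N → ℂ) :
    specOp u c *ᵥ f = (of u)ᵀ *ᵥ (c * (((of u)ᵀ)ᴴ *ᵥ f)) := by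
  rw [specOp_eq_conj, ← mulVec_mulVec, ← mulVec_mulVec]
  congr 1
  ext k
  exact mulVec_diagonal c _ k

variable (hu : ∀ i j, star (u i) ⬝ᵥ u j = if i = j then 1 else 0)
include hu

lemma specOp_mul (c d : Fin N → ℂ) : specOp u c * specOp u d = specOp u (c * d) := by
  simp only [specOp_eq_conj, Matrix.mul_assoc]
  rw [← Matrix.mul_assoc ((of u)ᵀ)ᴴ, conjTranspose_mul_self_of_orthonormal hu, Matrix.one_mul,
    ← Matrix.mul_assoc (diagonal c), diagonal_mul_diagonal]
  rfl

lemma specOp_one : specOp u 1 = 1 := by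
  rw [specOp_eq_conj, show diagonal (1 : Fin N → ℂ) = 1 from diagonal_one, Matrix.mul_one,
    mul_eq_one_comm.mp (conjTranspose_mul_self_of_orthonormal hu)]

lemma specOp_pow (c : Fin N → ℂ) (m : ℕ) : specOp u c ^ m = specOp u (c ^ m) := by
  induction m with
  | zero => rw [pow_zero, pow_zero, specOp_one hu]
  | succ m ih => rw [pow_succ, ih, specOp_mul hu, pow_succ]

lemma specOp_sub_one (c : Fin N → ℂ) : specOp u c - 1 = specOp u (c - 1) := by
  rw [← specOp_one hu, specOp_eq_conj, specOp_eq_conj, specOp_eq_conj, ← Matrix.sub_mul,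
    ← Matrix.mul_sub, diagonal_sub]
  rfl

lemma cnorm2_specOp_mulVec_le {c d : Fin N → ℂ} {M : ℝ} (hM : 0 ≤ M)
    (h : ∀ k, ‖c k‖ ≤ M * ‖d k‖) (f : Fin N → ℂ) :
    cnorm2 (specOp u c *ᵥ f) ≤ M * cnorm2 (specOp u d *ᵥ f) := by
  have hU := conjTranspose_mul_self_of_orthonormal hu
  rw [specOp_mulVec, specOp_mulVec, cnorm2_mulVec_of_conjTranspose_mul_self hU,
    cnorm2_mulVec_of_conjTranspose_mul_self hU]
  refine cnorm2_le_mul_of_norm_le hM fun k => ?_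
  simp only [Pi.mul_apply, norm_mul, ← mul_assoc]
  exact mul_le_mul_of_nonneg_right (h k) (norm_nonneg _)

end Spectral

lemma norm_exp_sub_one_pow_le {s t μ : ℝ} (hs : |s| ≤ t) (hμ : 0 ≤ μ) {r j : ℕ}
    (hjr : j ≤ r) :
    ‖(Complex.exp (Complex.I * s * (√μ : ℝ)) - 1) ^ r‖ ≤
      t ^ j * ‖(Complex.exp (Complex.I * s * (√μ : ℝ)) - 1) ^ (r - j) *
        ((μ ^ ((j : ℝ) / 2) : ℝ) : ℂ)‖ := by
  set z := Complex.exp (Complex.I * s * (√μ : ℝ)) - 1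
  have hz : ‖z‖ ≤ t * √μ := calc
    ‖z‖ ≤ ‖s * √μ‖ := by
      have h := Real.norm_exp_I_mul_ofReal_sub_one_le (x := s * √μ)
      rwa [Complex.ofReal_mul, ← mul_assoc] at h
    _ ≤ t * √μ := by
      rw [Real.norm_eq_abs, abs_mul, abs_of_nonneg (Real.sqrt_nonneg μ)]
      exact mul_le_mul_of_nonneg_right hs (Real.sqrt_nonneg μ)
  have hsqrt : √μ ^ j = μ ^ ((j : ℝ) / 2) := by
    rw [Real.sqrt_eq_rpow, ← Real.rpow_natCast, ← Real.rpow_mul hμ, one_div_mul_eq_div]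
  rw [norm_mul, norm_pow, norm_pow, Complex.norm_real, Real.norm_of_nonneg (by positivity),
    ← hsqrt, ← Nat.sub_add_cancel hjr, pow_add, Nat.add_sub_cancel]
  calc ‖z‖ ^ (r - j) * ‖z‖ ^ j ≤ ‖z‖ ^ (r - j) * (t * √μ) ^ j := by gcongr
    _ = t ^ j * (‖z‖ ^ (r - j) * √μ ^ j) := by ring

section Translation

variable {N : ℕ} {u : Fin N → Fin N → ℂ}
  (hu : ∀ i j, star (u i) ⬝ᵥ u j = if i = j then 1 else 0)
include hu

lemma Tmat_sub_one_pow (lam : Fin N → ℝ) (s : ℝ) (m : ℕ) :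
    (Tmat u lam s - 1) ^ m =
      specOp u (fun k => (Complex.exp (Complex.I * s * (√(lam k) : ℝ)) - 1) ^ m) := by
  rw [Tmat, specOp_sub_one hu, specOp_pow hu]
  rfl

lemma bddAbove_range_cnorm2_Tmat_sub_one_pow (lam : Fin N → ℝ) (m : ℕ) (f : Fin N → ℂ)
    (t : ℝ) :
    BddAbove (Set.range fun s : {s : ℝ // |s| ≤ t} =>
      cnorm2 ((Tmat u lam s.1 - 1) ^ m *ᵥ f)) := by
  refine ⟨2 ^ m * cnorm2 f, Set.forall_mem_range.mpr fun s => ?_⟩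
  have hbound : ∀ k, ‖(Complex.exp (Complex.I * s.1 * (√(lam k) : ℝ)) - 1) ^ m‖ ≤
      2 ^ m * ‖(1 : Fin N → ℂ) k‖ := fun k => by
    rw [Pi.one_apply, norm_one, mul_one, norm_pow]
    refine pow_le_pow_left₀ (norm_nonneg _) ((norm_sub_le _ _).trans ?_) m
    rw [norm_one, mul_assoc, ← Complex.ofReal_mul, Complex.norm_exp_I_mul_ofReal]
    norm_num
  simpa only [Tmat_sub_one_pow hu, specOp_one hu, one_mulVec] using
    cnorm2_specOp_mulVec_le hu (by positivity) hbound f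

lemma cnorm2_Tmat_sub_one_pow_le {lam : Fin N → ℝ} (hlam : ∀ k, 0 ≤ lam k) {r j : ℕ}
    (hjr : j ≤ r) {s t : ℝ} (hs : |s| ≤ t) (f : Fin N → ℂ) :
    cnorm2 ((Tmat u lam s - 1) ^ r *ᵥ f) ≤
      t ^ j * cnorm2 ((Tmat u lam s - 1) ^ (r - j) *ᵥ (Lpow u lam ((j : ℝ) / 2) *ᵥ f)) := by
  rw [Tmat_sub_one_pow hu, Tmat_sub_one_pow hu, Lpow, mulVec_mulVec, specOp_mul hu]
  have ht : 0 ≤ t := (abs_nonneg s).trans hs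
  exact cnorm2_specOp_mulVec_le hu (by positivity)
    (fun k => norm_exp_sub_one_pow_le hs (hlam k) hjr) f

end Translation

/-- for all integers `r ≥ 1` and `1 ≤ j ≤ r`, every `f ∈ ℂ^N` and every
`t > 0`, `ω_r(f, t) ≤ t^j · ω_{r-j}(L^{j/2} f, t)`. -/
theorem stmt19
    (N : ℕ) (hN : 2 ≤ N)
    (u : Fin N → Fin N → ℂ)
    (hu : ∀ i j, star (u i) ⬝ᵥ u j = if i = j then 1 else 0)
    (lam : Fin N → ℝ) (hmono : Monotone lam)
    (hlam0 : lam ⟨0, by omega⟩ = 0)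
    (r j : ℕ) (hjr : j ≤ r)
    (f : Fin N → ℂ) (t : ℝ) (ht : 0 < t) :
    omegaMod u lam r f t ≤
      t ^ j * omegaMod u lam (r - j) ((Lpow u lam ((j : ℝ) / 2)).mulVec f) t := by
  have hlam : ∀ k, 0 ≤ lam k := fun k => hlam0 ▸ hmono (Nat.zero_le k.val)
  have : Nonempty {s : ℝ // |s| ≤ t} := ⟨⟨0, by simpa using ht.le⟩⟩
  refine ciSup_le fun s => (cnorm2_Tmat_sub_one_pow_le hu hlam hjr s.2 f).trans ?_
  exact mul_le_mul_of_nonneg_left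
    (le_ciSup (bddAbove_range_cnorm2_Tmat_sub_one_pow hu lam (r - j) _ t) s) (by positivity)
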